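/- arXiv:math/9803042 — 2 statements merged into one kernel-verified Lean document; each statement's English description precedes it below -/
import Mathlib

section
/- Let A and B be groups of nilpotency class at most 2 with finite exponents m and n respectively, where m and n are relatively prime. Then the direct product A × B is absolutely closed in N₂ if and only if both A and B are absolutely closed in N₂. -/
universe u

/-- A group is nilpotent of class at most 2 (lies in `N₂`) if its commutator
subgroup is contained in its center. -/
def IsNil2 (G : Type*) [Group G] : Prop :=
  commutator G ≤ Subgroup.center G

/-- The dominion of a subgroup `B` of `A` in the variety `N₂`: the set of `a ∈ A`
such that any two homomorphisms from `A` to a nil-2 group agreeing on `B` agree at `a`. -/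
def Dominion {A : Type u} [Group A] (B : Subgroup A) : Set A :=
  {a | ∀ (C : Type u) [Group C], IsNil2 C →
    ∀ f g : A →* C, (∀ b ∈ B, f b = g b) → f a = g a}

/-- A group `B` is absolutely closed in `N₂` if for every nil-2 group `A`
containing (a copy of) `B` as a subgroup, the dominion of `B` in `A` is `B`. -/
def IsAbsolutelyClosed (B : Type u) [Group B] : Prop :=
  ∀ (A : Type u) [Group A], IsNil2 A →
    ∀ ι : B →* A, Function.Injective ι →
      Dominion ι.range = (ι.range : Set A)

section AuxLemmas

open scoped commutatorElement

variable {G : Type*} [Group G]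

lemma IsNil2.central (hG : IsNil2 G) (b c : G) : ∀ g : G, Commute ⁅b, c⁆ g := by
  intro g
  have h : ⁅b, c⁆ ∈ Subgroup.center G := by
    apply hG
    rw [commutator_def]
    exact Subgroup.commutator_mem_commutator (Subgroup.mem_top _) (Subgroup.mem_top _)
  exact ((Subgroup.mem_center_iff.mp h) g).symm

lemma commutatorElement_pow_left' (hG : IsNil2 G) (b c : G) (k : ℕ) :
    ⁅b ^ k, c⁆ = ⁅b, c⁆ ^ k := by
  have hz := hG.central b c
  have h1 : c * b * c⁻¹ = ⁅b, c⁆⁻¹ * b := by rw [commutatorElement_def]; group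
  have h2 : c * b ^ k * c⁻¹ = ⁅b, c⁆⁻¹ ^ k * b ^ k := by
    rw [← conj_pow, h1, ((hz b).inv_left).mul_pow]
  have h3 : c * (b ^ k)⁻¹ * c⁻¹ = (c * b ^ k * c⁻¹)⁻¹ := by group
  rw [commutatorElement_def]
  calc b ^ k * c * (b ^ k)⁻¹ * c⁻¹ = b ^ k * (c * (b ^ k)⁻¹ * c⁻¹) := by group
    _ = b ^ k * (c * b ^ k * c⁻¹)⁻¹ := by rw [h3]
    _ = b ^ k * (⁅b, c⁆⁻¹ ^ k * b ^ k)⁻¹ := by rw [h2]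
    _ = ⁅b, c⁆ ^ k := by rw [mul_inv_rev, inv_pow, inv_inv]; group

lemma isNil2_of_surjective {Q : Type*} [Group Q] (f : G →* Q)
    (hf : Function.Surjective f) (hG : IsNil2 G) : IsNil2 Q := by
  intro q hq
  rw [commutator_def, ← Subgroup.map_top_of_surjective f hf, ← Subgroup.map_commutator] at hq
  obtain ⟨c, hc, rfl⟩ := hq
  have hc' : c ∈ Subgroup.center G := hG (by rwa [commutator_def])
  rw [Subgroup.mem_center_iff]
  intro q
  obtain ⟨x, rfl⟩ := hf q
  rw [← map_mul, ← map_mul, Subgroup.mem_center_iff.mp hc' x]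

lemma isNil2_prod {A B : Type*} [Group A] [Group B] (hA : IsNil2 A) (hB : IsNil2 B) :
    IsNil2 (A × B) := by
  rw [IsNil2, commutator_def, Subgroup.commutator_le]
  intro g₁ _ g₂ _
  rw [Subgroup.mem_center_iff]
  intro g
  have h : (⁅g₁, g₂⁆ : A × B) = (⁅g₁.1, g₂.1⁆, ⁅g₁.2, g₂.2⁆) := rfl
  rw [h]
  exact Prod.ext_iff.mpr ⟨((hA.central g₁.1 g₂.1 g.1).eq).symm,
    ((hB.central g₁.2 g₂.2 g.2).eq).symm⟩

def centralPowTorsion (G : Type*) [Group G] (n : ℕ) : Subgroup G where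
  carrier := {x | x ∈ Subgroup.center G ∧ x ^ n = 1}
  one_mem' := ⟨Subgroup.one_mem _, one_pow n⟩
  mul_mem' := by
    rintro a b ⟨ha, ha'⟩ ⟨hb, hb'⟩
    refine ⟨Subgroup.mul_mem _ ha hb, ?_⟩
    have hab : Commute a b := (Subgroup.mem_center_iff.mp ha b).symm
    rw [hab.mul_pow, ha', hb', one_mul]
  inv_mem' := by
    rintro a ⟨ha, ha'⟩
    exact ⟨Subgroup.inv_mem _ ha, by rw [inv_pow, ha', inv_one]⟩

lemma oneSided {A B C : Type u} [Group A] [Group B] [Group C]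
    (hC : IsNil2 C) (hAc : IsAbsolutelyClosed A)
    (m n : ℕ) (hexpA : ∀ a : A, a ^ m = 1) (hexpB : ∀ b : B, b ^ n = 1)
    (K : ℕ) (hK1 : K ≡ 1 [MOD m]) (hKn : n ∣ K)
    (ι : A × B →* C) (hι : Function.Injective ι)
    {d : C} (hd : d ∈ Dominion ι.range) :
    (∃ a : A, d ^ K = ι (a, 1)) ∧ d ^ (m * n) = 1 := by
  obtain ⟨q, hq⟩ := hKn
  set ιA : A →* C := ι.comp (MonoidHom.inl A B) with hιA_def
  set ιB : B →* C := ι.comp (MonoidHom.inr A B) with hιB_def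
  have hιA_app : ∀ a : A, ιA a = ι (a, 1) := fun a => rfl
  have hιB_app : ∀ b : B, ιB b = ι (1, b) := fun b => rfl
  have hprod : ∀ (a : A) (b : B), ιA a * ιB b = ι (a, b) := by
    intro a b
    rw [hιA_app, hιB_app, ← map_mul, Prod.mk_mul_mk, mul_one, one_mul]
  have hprod' : ∀ (a : A) (b : B), ιB b * ιA a = ι (a, b) := by
    intro a b
    rw [hιA_app, hιB_app, ← map_mul, Prod.mk_mul_mk, mul_one, one_mul]
  have hιA_inj : Function.Injective ιA := by
    intro x y h
    have : ((x, 1) : A × B) = (y, 1) := hι h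
    simpa using congrArg Prod.fst this
  set W : Subgroup C := ⁅ιB.range, (⊤ : Subgroup C)⁆ with hW_def
  have hWle : W ≤ centralPowTorsion C n := by
    rw [hW_def, Subgroup.commutator_le]
    rintro x ⟨b₀, rfl⟩ g -
    refine ⟨Subgroup.mem_center_iff.mpr (fun y => ((hC.central (ιB b₀) g y).eq).symm), ?_⟩
    rw [← commutatorElement_pow_left' hC, ← map_pow, hexpB b₀, map_one]
    exact commutatorElement_one_left g
  haveI hWnormal : W.Normal := by
    constructor
    intro w hw g
    have h : g * w = w * g := Subgroup.mem_center_iff.mp (hWle hw).1 g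
    have hgw : g * w * g⁻¹ = w := by rw [h, mul_inv_cancel_right]
    rw [hgw]
    exact hw
  set KB : Subgroup C := ιB.range ⊔ W with hKB_def
  have hmemKB : ∀ x ∈ KB, ∃ b : B, ∃ w ∈ W, x = ιB b * w := by
    intro x hx
    have : x ∈ (↑(ιB.range ⊔ W) : Set C) := hx
    rw [Subgroup.mul_normal] at this
    obtain ⟨xb, hxb, xw, hxw, rfl⟩ := Set.mem_mul.mp this
    obtain ⟨b₀, rfl⟩ := hxb
    exact ⟨b₀, xw, hxw, rfl⟩
  haveI hKBnormal : KB.Normal := by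
    constructor
    intro x hx g
    obtain ⟨b, w, hw, rfl⟩ := hmemKB x hx
    have hwc : ∀ y : C, y * w = w * y := fun y => Subgroup.mem_center_iff.mp (hWle hw).1 y
    have key : g * (ιB b * w) * g⁻¹ = (⁅g, ιB b⁆ * ιB b) * w := by
      rw [commutatorElement_def]
      calc g * (ιB b * w) * g⁻¹ = (g * ιB b) * (w * g⁻¹) := by group
        _ = (g * ιB b) * (g⁻¹ * w) := by rw [hwc g⁻¹]
        _ = (g * ιB b * g⁻¹ * (ιB b)⁻¹ * ιB b) * w := by group
    rw [key]
    have h1 : ⁅g, ιB b⁆ ∈ W := by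
      rw [← commutatorElement_inv]
      exact Subgroup.inv_mem _
        (Subgroup.commutator_mem_commutator ⟨b, rfl⟩ (Subgroup.mem_top g))
    exact Subgroup.mul_mem _
      (Subgroup.mul_mem _ (le_sup_right (α := Subgroup C) h1)
        (le_sup_left (α := Subgroup C) ⟨b, rfl⟩))
      (le_sup_right (α := Subgroup C) hw)
  set π : C →* C ⧸ KB := QuotientGroup.mk' KB with hπ_def
  have hπB : ∀ b : B, π (ιB b) = 1 := by
    intro b
    rw [← MonoidHom.mem_ker, QuotientGroup.ker_mk']
    exact le_sup_left (α := Subgroup C) ⟨b, rfl⟩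
  set ι' : A →* C ⧸ KB := π.comp ιA with hι'_def
  have hι'inj : Function.Injective ι' := by
    rw [injective_iff_map_eq_one]
    intro a ha
    have hmem : ιA a ∈ KB := by
      rw [← QuotientGroup.ker_mk' KB]
      exact ha
    obtain ⟨b, w, hw, heq⟩ := hmemKB _ hmem
    have hcw : Commute (ιB b) w := Subgroup.mem_center_iff.mp (hWle hw).1 (ιB b)
    have hbK : b ^ K = 1 := by rw [hq, pow_mul, hexpB, one_pow]
    have hwK : w ^ K = 1 := by rw [hq, pow_mul, (hWle hw).2, one_pow]
    have hpow : ιA (a ^ K) = 1 := by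
      rw [map_pow, heq, hcw.mul_pow, ← map_pow, hbK, map_one, hwK, one_mul]
    have haK : a ^ K = 1 := hιA_inj (by rw [hpow, map_one])
    have h1 : orderOf a ∣ m := orderOf_dvd_of_pow_eq_one (hexpA a)
    have h2 : orderOf a ∣ K := orderOf_dvd_of_pow_eq_one haK
    have h3 : (1 : ℕ) ≡ 0 [MOD orderOf a] :=
      ((Nat.ModEq.of_dvd h1 hK1).symm).trans (Nat.modEq_zero_iff_dvd.mpr h2)
    have h4 : orderOf a ∣ 1 := Nat.modEq_zero_iff_dvd.mp h3
    exact orderOf_eq_one_iff.mp (Nat.dvd_one.mp h4)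
  have hQnil : IsNil2 (C ⧸ KB) := isNil2_of_surjective π (QuotientGroup.mk'_surjective KB) hC
  have hdq : π d ∈ Dominion ι'.range := by
    intro D _ hD f g hfg
    exact hd D hD (f.comp π) (g.comp π) (by
      rintro x ⟨⟨a, b⟩, rfl⟩
      have hx : π (ι (a, b)) = ι' a := by
        rw [← hprod, map_mul, hπB b, mul_one]
        rfl
      show f (π (ι (a, b))) = g (π (ι (a, b)))
      rw [hx]
      exact hfg _ ⟨a, rfl⟩)
  rw [hAc (C ⧸ KB) hQnil ι' hι'inj] at hdq
  obtain ⟨a, ha⟩ := hdq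
  have ha' : π (ιA a) = π d := ha
  obtain ⟨z, hz, hzd⟩ := (QuotientGroup.mk'_eq_mk' KB).mp ha'
  obtain ⟨b, w, hw, rfl⟩ := hmemKB z hz
  have hcw : ∀ y : C, Commute y w := fun y => Subgroup.mem_center_iff.mp (hWle hw).1 y
  have hcab : Commute (ιA a) (ιB b) := (hprod a b).trans (hprod' a b).symm
  have hd_eq : d = ιA a * (ιB b * w) := hzd.symm
  have hdpow : ∀ k : ℕ, d ^ k = ιA (a ^ k) * (ιB (b ^ k) * w ^ k) := by
    intro k
    rw [hd_eq, (hcab.mul_right (hcw (ιA a))).mul_pow, (hcw (ιB b)).mul_pow,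
      map_pow, map_pow]
  constructor
  · refine ⟨a ^ K, ?_⟩
    have hbK : b ^ K = 1 := by rw [hq, pow_mul, hexpB, one_pow]
    have hwK : w ^ K = 1 := by rw [hq, pow_mul, (hWle hw).2, one_pow]
    rw [hdpow K, hbK, hwK, map_one, one_mul, mul_one, hιA_app]
  · have hamn : a ^ (m * n) = 1 := by rw [pow_mul, hexpA, one_pow]
    have hbmn : b ^ (m * n) = 1 := by rw [mul_comm m n, pow_mul, hexpB, one_pow]
    have hwmn : w ^ (m * n) = 1 := by rw [mul_comm m n, pow_mul, (hWle hw).2, one_pow]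
    rw [hdpow (m * n), hamn, hbmn, hwmn, map_one, map_one, one_mul, one_mul]

lemma range_subset_dominion {A : Type u} [Group A] (B : Subgroup A) :
    (B : Set A) ⊆ Dominion B := fun x hx _ _ _ f g hfg => hfg x hx

end AuxLemmas

/-- If `A` and `B` are nil-2 groups of relatively prime finite exponents, then `A × B`
is absolutely closed in `N₂` iff both `A` and `B` are. -/
theorem prod_absolutelyClosed_iff_of_coprime_exponents {A B : Type u} [Group A] [Group B]
    (hA : IsNil2 A) (hB : IsNil2 B) (m n : ℕ) (hm : 0 < m) (hn : 0 < n)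
    (hexpA : ∀ a : A, a ^ m = 1) (hexpB : ∀ b : B, b ^ n = 1)
    (hcop : Nat.Coprime m n) :
    IsAbsolutelyClosed (A × B) ↔ IsAbsolutelyClosed A ∧ IsAbsolutelyClosed B := by
  constructor
  · intro hAB
    constructor
    · intro C _ hC ι hι
      refine Set.Subset.antisymm ?_ (range_subset_dominion _)
      intro d hd
      have hCB : IsNil2 (C × B) := isNil2_prod hC hB
      set j : A × B →* C × B := ι.prodMap (MonoidHom.id B) with hj_def
      have hj_app : ∀ p : A × B, j p = (ι p.1, p.2) := fun p => rfl
      have hjinj : Function.Injective j := by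
        intro x y h
        rw [hj_app, hj_app, Prod.mk.injEq] at h
        exact Prod.ext (hι h.1) h.2
      have hmem : ((d, 1) : C × B) ∈ Dominion j.range := by
        intro D _ hD f g hfg
        exact hd D hD (f.comp (MonoidHom.inl C B)) (g.comp (MonoidHom.inl C B)) (by
          rintro x ⟨a, rfl⟩
          show f (ι a, 1) = g (ι a, 1)
          exact hfg _ ⟨(a, 1), rfl⟩)
      rw [hAB (C × B) hCB j hjinj] at hmem
      obtain ⟨⟨a, b⟩, hab⟩ := hmem
      exact ⟨a, congrArg Prod.fst hab⟩
    · intro C _ hC ι hι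
      refine Set.Subset.antisymm ?_ (range_subset_dominion _)
      intro d hd
      have hAC : IsNil2 (A × C) := isNil2_prod hA hC
      set j : A × B →* A × C := (MonoidHom.id A).prodMap ι with hj_def
      have hj_app : ∀ p : A × B, j p = (p.1, ι p.2) := fun p => rfl
      have hjinj : Function.Injective j := by
        intro x y h
        rw [hj_app, hj_app, Prod.mk.injEq] at h
        exact Prod.ext h.1 (hι h.2)
      have hmem : ((1, d) : A × C) ∈ Dominion j.range := by
        intro D _ hD f g hfg
        exact hd D hD (f.comp (MonoidHom.inr A C)) (g.comp (MonoidHom.inr A C)) (by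
          rintro x ⟨b, rfl⟩
          show f (1, ι b) = g (1, ι b)
          exact hfg _ ⟨(1, b), rfl⟩)
      rw [hAB (A × C) hAC j hjinj] at hmem
      obtain ⟨⟨a, b⟩, hab⟩ := hmem
      exact ⟨b, congrArg Prod.snd hab⟩
  · rintro ⟨hAc, hBc⟩
    intro C _ hC ι hι
    refine Set.Subset.antisymm ?_ (range_subset_dominion _)
    intro d hd
    obtain ⟨K, hK1, hK0⟩ := Nat.chineseRemainder hcop 1 0
    obtain ⟨L, hL1, hL0⟩ := Nat.chineseRemainder hcop.symm 1 0
    have hKn : n ∣ K := Nat.modEq_zero_iff_dvd.mp hK0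
    have hLm : m ∣ L := Nat.modEq_zero_iff_dvd.mp hL0
    obtain ⟨⟨a, hdK⟩, hdmn⟩ := oneSided hC hAc m n hexpA hexpB K hK1 hKn ι hι hd
    -- swapped version
    set e : B × A ≃* A × B := (MulEquiv.prodComm : B × A ≃* A × B) with he_def
    set ι₂ : B × A →* C := ι.comp e.toMonoidHom with hι₂_def
    have hι₂inj : Function.Injective ι₂ := by
      intro x y h
      exact e.injective (hι h)
    have hrange : ι₂.range = ι.range := by
      ext x
      constructor
      · rintro ⟨p, rfl⟩; exact ⟨e p, rfl⟩
      · rintro ⟨p, rfl⟩; exact ⟨e.symm p, by simp [hι₂_def]⟩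
    have hd₂ : d ∈ Dominion ι₂.range := by rw [hrange]; exact hd
    obtain ⟨⟨b, hdL⟩, -⟩ := oneSided hC hBc n m hexpB hexpA L hL1 hLm ι₂ hι₂inj hd₂
    have hdL' : d ^ L = ι (1, b) := by
      rw [hdL]; rfl
    have horder : orderOf d ∣ m * n := orderOf_dvd_of_pow_eq_one hdmn
    have hKLm : K + L ≡ 1 [MOD m] := by
      have := hK1.add (Nat.modEq_zero_iff_dvd.mpr hLm)
      simpa using this
    have hKLn : K + L ≡ 1 [MOD n] := by
      have := (Nat.modEq_zero_iff_dvd.mpr hKn).add hL1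
      simpa using this
    have hKL : K + L ≡ 1 [MOD m * n] :=
      (Nat.modEq_and_modEq_iff_modEq_mul hcop).mp ⟨hKLm, hKLn⟩
    have hd1 : d ^ (K + L) = d ^ 1 :=
      pow_eq_pow_iff_modEq.mpr (Nat.ModEq.of_dvd horder hKL)
    refine ⟨(a, b), ?_⟩
    have : ι (a, b) = d ^ K * d ^ L := by
      rw [hdK, hdL', ← map_mul, Prod.mk_mul_mk, mul_one, one_mul]
    rw [this, ← pow_add, hd1, pow_one]
end

section
/- The free abelian group of rank 2, ℤ × ℤ, is not absolutely closed in N₂. -/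
universe u

/-- Mod-4 Heisenberg-like group: ℤ × ℤ × ZMod 4 with twisted multiplication. -/
@[ext] structure Heis where
  x : ℤ
  y : ℤ
  z : ZMod 4

namespace Heis

instance : Mul Heis := ⟨fun a b => ⟨a.x + b.x, a.y + b.y, a.z + b.z + (a.x : ZMod 4) * (b.y : ZMod 4)⟩⟩
instance : One Heis := ⟨⟨0, 0, 0⟩⟩
instance : Inv Heis := ⟨fun a => ⟨-a.x, -a.y, -a.z + (a.x : ZMod 4) * (a.y : ZMod 4)⟩⟩

@[simp] lemma mul_x (a b : Heis) : (a * b).x = a.x + b.x := rfl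
@[simp] lemma mul_y (a b : Heis) : (a * b).y = a.y + b.y := rfl
@[simp] lemma mul_z (a b : Heis) : (a * b).z = a.z + b.z + (a.x : ZMod 4) * (b.y : ZMod 4) := rfl
@[simp] lemma one_x : (1 : Heis).x = 0 := rfl
@[simp] lemma one_y : (1 : Heis).y = 0 := rfl
@[simp] lemma one_z : (1 : Heis).z = 0 := rfl
@[simp] lemma inv_x (a : Heis) : (a⁻¹).x = -a.x := rfl
@[simp] lemma inv_y (a : Heis) : (a⁻¹).y = -a.y := rfl
@[simp] lemma inv_z (a : Heis) : (a⁻¹).z = -a.z + (a.x : ZMod 4) * (a.y : ZMod 4) := rfl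

instance : Group Heis where
  mul_assoc a b c := by ext <;> simp <;> push_cast <;> ring
  one_mul a := by ext <;> simp
  mul_one a := by ext <;> simp
  inv_mul_cancel a := by ext <;> simp <;> push_cast <;> ring

lemma isNil2 : IsNil2 Heis := by
  rw [IsNil2, commutator_def, Subgroup.commutator_le]
  intro g1 _ g2 _
  rw [Subgroup.mem_center_iff]
  intro g
  ext <;> simp [commutatorElement_def] <;> push_cast <;> ring

end Heis

open scoped commutatorElement

section Nil2Lemmas

variable {C : Type*} [Group C]

lemma comm_central (hC : IsNil2 C) (a b g : C) : g * ⁅a, b⁆ = ⁅a, b⁆ * g := by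
  have h : ⁅a, b⁆ ∈ commutator C := by
    rw [commutator_def]
    exact Subgroup.commutator_mem_commutator (Subgroup.mem_top a) (Subgroup.mem_top b)
  exact Subgroup.mem_center_iff.mp (hC h) g

lemma sq_comm_left (hC : IsNil2 C) (a b : C) : ⁅a ^ 2, b⁆ = ⁅a, b⁆ ^ 2 := by
  have key : a * ⁅a, b⁆ = ⁅a, b⁆ * a := comm_central hC a b a
  calc ⁅a ^ 2, b⁆ = a * ⁅a, b⁆ * (b * a⁻¹ * b⁻¹) := by
        simp only [sq, commutatorElement_def]; group
    _ = ⁅a, b⁆ * a * (b * a⁻¹ * b⁻¹) := by rw [key]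
    _ = ⁅a, b⁆ * ⁅a, b⁆ := by simp only [commutatorElement_def]; group
    _ = ⁅a, b⁆ ^ 2 := (sq _).symm

lemma sq_comm_right (hC : IsNil2 C) (a b : C) : ⁅a, b ^ 2⁆ = ⁅a, b⁆ ^ 2 := by
  have key : b * ⁅a, b⁆ = ⁅a, b⁆ * b := comm_central hC a b b
  calc ⁅a, b ^ 2⁆ = ⁅a, b⁆ * (b * ⁅a, b⁆ * b⁻¹) := by
        simp only [sq, commutatorElement_def]; group
    _ = ⁅a, b⁆ * (⁅a, b⁆ * b * b⁻¹) := by rw [key]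
    _ = ⁅a, b⁆ * ⁅a, b⁆ := by group
    _ = ⁅a, b⁆ ^ 2 := (sq _).symm

end Nil2Lemmas

def emb : Multiplicative ℤ × Multiplicative ℤ →* Heis :=
  MonoidHom.mk' (fun p => ⟨2 * p.1.toAdd, 2 * p.2.toAdd, 0⟩) (by
    intro p q
    have h4 : ((4 : ℤ) : ZMod 4) = 0 := by decide
    ext
    · simp; ring
    · simp; ring
    · simp only [Heis.mul_z]
      push_cast
      ring_nf
      rw [show (4 : ZMod 4) = 0 by decide, mul_zero])

lemma emb_inj : Function.Injective emb := by
  intro p q h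
  have hx := congrArg Heis.x h
  have hy := congrArg Heis.y h
  simp [emb] at hx hy
  ext
  · exact hx
  · exact hy

def xg : Heis := ⟨1, 0, 0⟩
def yg : Heis := ⟨0, 1, 0⟩

lemma comm_sq : ((⟨0, 0, 2⟩ : Heis)) = ⁅xg, yg⁆ ^ 2 := by
  ext <;> simp [commutatorElement_def, sq, xg, yg] <;> decide

lemma xg_sq_mem : xg ^ 2 ∈ emb.range := by
  refine ⟨(Multiplicative.ofAdd 1, Multiplicative.ofAdd 0), ?_⟩
  ext <;> simp [emb, sq, xg]

lemma yg_sq_mem : yg ^ 2 ∈ emb.range := by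
  refine ⟨(Multiplicative.ofAdd 0, Multiplicative.ofAdd 1), ?_⟩
  ext <;> simp [emb, sq, yg]

lemma not_mem_range : ((⟨0, 0, 2⟩ : Heis)) ∉ emb.range := by
  rintro ⟨p, hp⟩
  have := congrArg Heis.z hp
  simp [emb] at this
  exact absurd this (by decide)

lemma mem_dominion : ((⟨0, 0, 2⟩ : Heis)) ∈ Dominion emb.range := by
  intro C _ hC f g hfg
  have hx : (f xg) ^ 2 = (g xg) ^ 2 := by
    rw [← map_pow, ← map_pow]
    exact hfg _ xg_sq_mem
  have hy : (f yg) ^ 2 = (g yg) ^ 2 := by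
    rw [← map_pow, ← map_pow]
    exact hfg _ yg_sq_mem
  rw [comm_sq, map_pow, map_pow, map_commutatorElement, map_commutatorElement]
  calc ⁅f xg, f yg⁆ ^ 2 = ⁅(f xg) ^ 2, f yg⁆ := (sq_comm_left hC _ _).symm
    _ = ⁅(g xg) ^ 2, f yg⁆ := by rw [hx]
    _ = ⁅g xg, f yg⁆ ^ 2 := sq_comm_left hC _ _
    _ = ⁅g xg, (f yg) ^ 2⁆ := (sq_comm_right hC _ _).symm
    _ = ⁅g xg, (g yg) ^ 2⁆ := by rw [hy]
    _ = ⁅g xg, g yg⁆ ^ 2 := sq_comm_right hC _ _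

/-- The free abelian group of rank 2, `ℤ × ℤ`, is not absolutely closed in `N₂`. -/
theorem int_prod_int_not_absolutelyClosed :
    ¬ IsAbsolutelyClosed (Multiplicative ℤ × Multiplicative ℤ) := by
  intro h
  have heq := h Heis Heis.isNil2 emb emb_inj
  have : ((⟨0, 0, 2⟩ : Heis)) ∈ (emb.range : Set Heis) := heq ▸ mem_dominion
  exact not_mem_range this
end
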